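/- Let (V, μ, α) be a multiplicative Hom-Jordan algebra over a field F. If D₁ lies in the α^k-centroid C_{α^k}(V) and D₂ lies in the α^s-centroid C_{α^s}(V) (k, s ≥ 0), then α ∘ D₁ lies in C_{α^(k+1)}(V) and the commutator [D₁, D₂] = D₁ ∘ D₂ − D₂ ∘ D₁ lies in C_{α^(k+s)}(V). -/
import Mathlib


/-- `D` lies in the `α^k`-centroid of the Hom-Jordan algebra `(V, μ, α)`. -/
def InCentroid {F V : Type*} [Field F] [AddCommGroup V] [Module F V]
    (μ : V →ₗ[F] V →ₗ[F] V) (α : V →ₗ[F] V) (k : ℕ) (D : V →ₗ[F] V) : Prop :=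
  D ∘ₗ α = α ∘ₗ D ∧ ∀ x y : V,
    μ (D x) ((α ^ k) y) = D (μ x y) ∧ μ ((α ^ k) x) (D y) = D (μ x y)

theorem stmt2 {F V : Type*} [Field F] [AddCommGroup V] [Module F V]
    (μ : V →ₗ[F] V →ₗ[F] V) (α : V →ₗ[F] V)
    (hcomm : ∀ x y : V, μ x y = μ y x)
    (hJ : ∀ x y : V, μ (α (α x)) (μ y (μ x x)) = μ (μ (α x) y) (α (μ x x)))
    (hmult : ∀ x y : V, α (μ x y) = μ (α x) (α y))
    (k s : ℕ) (D₁ D₂ : V →ₗ[F] V)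
    (h₁ : InCentroid μ α k D₁) (h₂ : InCentroid μ α s D₂) :
    InCentroid μ α (k + 1) (α ∘ₗ D₁) ∧
    InCentroid μ α (k + s) (D₁ ∘ₗ D₂ - D₂ ∘ₗ D₁) := by
  obtain ⟨hc1, hm1⟩ := h₁
  obtain ⟨hc2, hm2⟩ := h₂
  have hca1 : ∀ x, D₁ (α x) = α (D₁ x) := fun x => congrFun (congrArg DFunLike.coe hc1) x
  have hca2 : ∀ x, D₂ (α x) = α (D₂ x) := fun x => congrFun (congrArg DFunLike.coe hc2) x
  constructor
  · refine ⟨?_, fun x y => ?_⟩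
    · ext x
      simp [hca1]
    have hy : (α ^ (k + 1)) y = α ((α ^ k) y) := by
      rw [pow_succ']; rfl
    have hx : (α ^ (k + 1)) x = α ((α ^ k) x) := by
      rw [pow_succ']; rfl
    constructor
    · simp only [LinearMap.comp_apply, hy, ← hmult, (hm1 x y).1]
    · simp only [LinearMap.comp_apply, hx, ← hmult, (hm1 x y).2]
  · refine ⟨?_, fun x y => ?_⟩
    · ext x
      simp [hca1, hca2]
    have hks : ∀ z : V, (α ^ (k + s)) z = (α ^ k) ((α ^ s) z) := by
      intro z; rw [pow_add]; rfl
    have hsk : ∀ z : V, (α ^ (k + s)) z = (α ^ s) ((α ^ k) z) := by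
      intro z; rw [add_comm, pow_add]; rfl
    constructor
    · simp only [LinearMap.sub_apply, LinearMap.comp_apply, map_sub,
        LinearMap.sub_apply]
      rw [hks y, (hm1 (D₂ x) ((α ^ s) y)).1, (hm2 x y).1,
        ← hks y, hsk y, (hm2 (D₁ x) ((α ^ k) y)).1, (hm1 x y).1]
    · simp only [LinearMap.sub_apply, LinearMap.comp_apply, map_sub,
        LinearMap.sub_apply]
      rw [hks x, (hm1 ((α ^ s) x) (D₂ y)).2, (hm2 x y).2,
        ← hks x, hsk x, (hm2 ((α ^ k) x) (D₁ y)).2, (hm1 x y).2]
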